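/- Let G be a disconnected graph with components G₁,…,G_ℓ (ℓ ≥ 2), each of order at least 2, and let S' be a convex set of G∘Ḡ such that S' ∩ V(Ḡ) contains two vertices x̄, ȳ that are nonadjacent in Ḡ. If additionally S' ∩ V(G_i) ≠ ∅ for every component G_i, then S' = V(G∘Ḡ). -/

import Mathlib

/-!
Nonadjacent `x̄, ȳ` in `Ḡ` means `x ~ y` in `G`, so `x̄, ȳ` are at distance two in `G ∘ Ḡ` and
every `z̄` with `z` outside the component of `x` is a common neighbour of them; hence `S'`
contains these `z̄`, in particular both ends of an edge of another component (components have
order at least 2). Running the same argument from that edge puts all of `V(Ḡ)` into `S'`.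
Finally, for an edge `uv` of `G` with `u ∈ S'`, the vertex `v` is a common neighbour of `u`
and `v̄ ∈ S'`, which are at distance two; so `S'` spreads from the vertex it meets in each
component of `G` to the whole component.
-/

open SimpleGraph

/-- The complementary prism `G ∘ Ḡ`: left copies (`Sum.inl`) form `G`,
right copies (`Sum.inr`) form the complement `Gᶜ`, and each `inl v` is
matched to `inr v`. -/
def compPrism {V : Type*} (G : SimpleGraph V) : SimpleGraph (V ⊕ V) where
  Adj x y :=
    match x, y with
    | Sum.inl a, Sum.inl b => G.Adj a b
    | Sum.inr a, Sum.inr b => Gᶜ.Adj a b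
    | Sum.inl a, Sum.inr b => a = b
    | Sum.inr a, Sum.inl b => a = b
  symm := by
    constructor; rintro (a | a) (b | b) h <;> simp_all [compl_adj, adj_comm, eq_comm]
  loopless := by
    constructor; rintro (a | a) h <;> simp_all

/-- `v` lies on some shortest `u`-`w` path in `G`. -/
def inInterval {V : Type*} (G : SimpleGraph V) (u w v : V) : Prop :=
  ∃ p : G.Walk u w, p.IsPath ∧ p.length = G.dist u w ∧ v ∈ p.support

/-- A set is geodesically convex if it contains every vertex on any shortest
path between two of its vertices. -/
def IsGeodConvex {V : Type*} (G : SimpleGraph V) (S : Set V) : Prop :=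
  ∀ u ∈ S, ∀ w ∈ S, ∀ v, inInterval G u w v → v ∈ S

/-- The geodesic convex hull of a set of vertices. -/
def geodHull {V : Type*} (G : SimpleGraph V) (S : Set V) : Set V :=
  ⋂₀ {T | S ⊆ T ∧ IsGeodConvex G T}

/-- The convexity number: the maximum cardinality of a proper convex set. -/
noncomputable def convexityNumber {V : Type*} (G : SimpleGraph V) : ℕ :=
  sSup {n | ∃ S : Set V, IsGeodConvex G S ∧ S ≠ Set.univ ∧ S.ncard = n}

section Interval

variable {V : Type*} {G : SimpleGraph V}

lemma inInterval_of_adj_of_adj {a b m : V} (hne : a ≠ b) (hab : ¬G.Adj a b)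
    (ham : G.Adj a m) (hmb : G.Adj m b) : inInterval G a b m := by
  have hdist : G.dist a b = 2 := by
    rw [SimpleGraph.dist, edist_eq_two_iff.mpr ⟨hne, hab, m, ham, hmb.symm⟩]
    rfl
  refine ⟨.cons ham (.cons hmb .nil), ?_, by simp [hdist], by simp⟩
  simp [Walk.isPath_def, hne, ham.ne, hmb.ne]

lemma IsGeodConvex.mem_of_adj_of_adj {S : Set V} (hS : IsGeodConvex G S) {a b m : V}
    (ha : a ∈ S) (hb : b ∈ S) (hne : a ≠ b) (hab : ¬G.Adj a b)
    (ham : G.Adj a m) (hmb : G.Adj m b) : m ∈ S :=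
  hS a ha b hb m (inInterval_of_adj_of_adj hne hab ham hmb)

end Interval

namespace SimpleGraph

variable {V : Type*} {G : SimpleGraph V}

lemma compl_adj_of_connectedComponentMk_ne {a b : V}
    (h : G.connectedComponentMk a ≠ G.connectedComponentMk b) : Gᶜ.Adj a b :=
  ⟨fun hab => h (hab ▸ rfl), fun hab => h (ConnectedComponent.sound hab.reachable)⟩

lemma exists_connectedComponent_ne (h : ¬G.Preconnected) (c : G.ConnectedComponent) :
    ∃ d, d ≠ c := by
  by_contra! hc
  exact h fun u v => ConnectedComponent.exact ((hc _).trans (hc _).symm)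

lemma ConnectedComponent.exists_adj_of_two_le_ncard_supp (c : G.ConnectedComponent)
    (hc : 2 ≤ c.supp.ncard) : ∃ a b, G.connectedComponentMk a = c ∧ G.Adj a b := by
  obtain ⟨a, ha, b, hb, hab⟩ :=
    (Set.one_lt_ncard (Set.finite_of_ncard_pos (by omega))).mp hc
  obtain ⟨p⟩ : G.Reachable a b := ConnectedComponent.exact (ha.trans hb.symm)
  exact ⟨a, _, ha, p.adj_snd (Walk.not_nil_of_ne hab)⟩

end SimpleGraph

section compPrism

variable {V : Type*} {G : SimpleGraph V}

@[simp] lemma compPrism_adj_inl_inl {a b : V} :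
    (compPrism G).Adj (.inl a) (.inl b) ↔ G.Adj a b := Iff.rfl

@[simp] lemma compPrism_adj_inr_inr {a b : V} :
    (compPrism G).Adj (.inr a) (.inr b) ↔ Gᶜ.Adj a b := Iff.rfl

@[simp] lemma compPrism_adj_inl_inr {a b : V} :
    (compPrism G).Adj (.inl a) (.inr b) ↔ a = b := Iff.rfl

@[simp] lemma compPrism_adj_inr_inl {a b : V} :
    (compPrism G).Adj (.inr a) (.inl b) ↔ a = b := Iff.rfl

variable {S : Set (V ⊕ V)}

lemma IsGeodConvex.inr_mem_of_adj (hS : IsGeodConvex (compPrism G) S) {a b z : V}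
    (ha : .inr a ∈ S) (hb : .inr b ∈ S) (hab : G.Adj a b)
    (hz : G.connectedComponentMk z ≠ G.connectedComponentMk a) : .inr z ∈ S := by
  have hba : G.connectedComponentMk b = G.connectedComponentMk a :=
    ConnectedComponent.sound hab.symm.reachable
  refine hS.mem_of_adj_of_adj ha hb (by simpa using hab.ne) (by simp [compl_adj, hab]) ?_ ?_
  · simpa using compl_adj_of_connectedComponentMk_ne (Ne.symm hz)
  · simpa using compl_adj_of_connectedComponentMk_ne (hba ▸ hz)

lemma IsGeodConvex.inr_mem_of_adj_of_adj (hS : IsGeodConvex (compPrism G) S) {a b c d : V}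
    (ha : .inr a ∈ S) (hb : .inr b ∈ S) (hab : G.Adj a b) (hcd : G.Adj c d)
    (hca : G.connectedComponentMk c ≠ G.connectedComponentMk a) (z : V) : .inr z ∈ S := by
  have hdc : G.connectedComponentMk d = G.connectedComponentMk c :=
    ConnectedComponent.sound hcd.symm.reachable
  by_cases hz : G.connectedComponentMk z = G.connectedComponentMk c
  · exact hS.inr_mem_of_adj ha hb hab (hz ▸ hca)
  · exact hS.inr_mem_of_adj (hS.inr_mem_of_adj ha hb hab hca)
      (hS.inr_mem_of_adj ha hb hab (hdc ▸ hca)) hcd hz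

lemma IsGeodConvex.inl_mem_of_reachable (hS : IsGeodConvex (compPrism G) S)
    (hinr : ∀ z, .inr z ∈ S) {a b : V} (ha : .inl a ∈ S) (hab : G.Reachable a b) :
    .inl b ∈ S := by
  obtain ⟨p⟩ := hab
  induction p with
  | nil => exact ha
  | @cons u v _ h _ ih =>
    exact ih (hS.mem_of_adj_of_adj ha (hinr v) (by simp) (by simp [h.ne])
      (by simpa using h) (by simp))

end compPrism

theorem stmt13_general {V : Type*} (G : SimpleGraph V)
    (hdisc : ¬G.Preconnected)
    (hnt : ∀ c : G.ConnectedComponent, 2 ≤ c.supp.ncard)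
    (S' : Set (V ⊕ V)) (hconv : IsGeodConvex (compPrism G) S')
    (x y : V) (hx : Sum.inr x ∈ S') (hy : Sum.inr y ∈ S')
    (hxy : x ≠ y) (hnonadj : ¬Gᶜ.Adj x y)
    (hmeet : ∀ c : G.ConnectedComponent, ∃ w ∈ c.supp, Sum.inl w ∈ S') :
    S' = Set.univ := by
  have hGxy : G.Adj x y := by simpa [compl_adj, hxy] using hnonadj
  obtain ⟨D, hD⟩ := exists_connectedComponent_ne hdisc (G.connectedComponentMk x)
  obtain ⟨c, d, rfl, hcd⟩ := D.exists_adj_of_two_le_ncard_supp (hnt D)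
  have hinr := hconv.inr_mem_of_adj_of_adj hx hy hGxy hcd hD
  refine Set.eq_univ_of_forall fun
    | .inr z => hinr z
    | .inl z => ?_
  obtain ⟨w, hw, hwS⟩ := hmeet (G.connectedComponentMk z)
  exact hconv.inl_mem_of_reachable hinr hwS (ConnectedComponent.exact hw)

theorem stmt13 {V : Type*} [Fintype V] (G : SimpleGraph V)
    (hdisc : ¬G.Preconnected)
    (hnt : ∀ c : G.ConnectedComponent, 2 ≤ c.supp.ncard)
    (S' : Set (V ⊕ V)) (hconv : IsGeodConvex (compPrism G) S')
    (x y : V) (hx : Sum.inr x ∈ S') (hy : Sum.inr y ∈ S')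
    (hxy : x ≠ y) (hnonadj : ¬Gᶜ.Adj x y)
    (hmeet : ∀ c : G.ConnectedComponent, ∃ w ∈ c.supp, Sum.inl w ∈ S') :
    S' = Set.univ :=
  stmt13_general G hdisc hnt S' hconv x y hx hy hxy hnonadj hmeet
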